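/- arXiv:1010.2219 — 3 statements merged into one kernel-verified Lean document; each statement's English description precedes it below -/
import Mathlib

section
/- Let P = (P, ≤_P) be a partial order in which every element has only finitely many ≤_P-successors, and let B₀ and B₁ be parallel bouquets in P. For i ∈ {0,1} set F_i = {b ∈ B_i : for all b' with b ≤_P b', if b' ∈ B_i then b' = max B_i}. Then F₀ and F₁ are parallel fans in P with max F_i = max B_i, and an element m ∈ P skewly tops B₀ and B₁ if and only if it skewly tops F₀ and F₁. -/
namespace SatOrder

variable {α Q : Type}

/-- A set representation of a partial order: an injective map into sets such that
`p < p'` iff `φ p ⊊ φ p'`. -/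
def IsSetRep [PartialOrder α] (φ : α → Set Q) : Prop :=
  Function.Injective φ ∧ ∀ p p' : α, p < p' ↔ φ p ⊂ φ p'

/-- The residual set `φ p − ⋃_{p' < p} φ p'`. -/
def resid [PartialOrder α] (φ : α → Set Q) (p : α) : Set Q :=
  φ p \ ⋃ p' ∈ {x : α | x < p}, φ p'

/-- A parsimonious set representation: every residual is a singleton, and every element of `φ p`
is the residual element of some `p' ≤ p`. -/
def IsParsimonious [PartialOrder α] (φ : α → Set Q) : Prop :=
  IsSetRep φ ∧ (∀ p : α, ∃ q : Q, resid φ p = {q}) ∧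
    (∀ p : α, ∀ q ∈ φ p, ∃ p' : α, p' ≤ p ∧ resid φ p' = {q})

/-- `a` is the map `α_φ`, i.e. `{a p} = φ p − ⋃_{p' < p} φ p'` for all `p`. -/
def IsAlpha [PartialOrder α] (φ : α → Set Q) (a : α → Q) : Prop :=
  ∀ p : α, resid φ p = {a p}

/-- A partial order is saturated if `α_φ` is injective for every parsimonious
set representation `φ`. -/
def IsSaturated (α : Type) [PartialOrder α] : Prop :=
  ∀ (Q : Type) (φ : α → Set Q), IsParsimonious φ →
    ∀ a : α → Q, IsAlpha φ a → Function.Injective a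

/-- A bouquet with maximum `m`: a set with at least two elements whose maximum is `m`. -/
def IsBouquet [PartialOrder α] (B : Set α) (m : α) : Prop :=
  B.Nontrivial ∧ m ∈ B ∧ ∀ b ∈ B, b ≤ m

/-- A fan: a bouquet such that no two distinct elements of `F − {max F}` are comparable. -/
def IsFan [PartialOrder α] (F : Set α) (m : α) : Prop :=
  IsBouquet F m ∧ ∀ b ∈ F \ {m}, ∀ b' ∈ F \ {m}, b ≤ b' → b = b'

/-- Two sets are parallel if no element of one is comparable with any element of the other. -/
def ParallelB [PartialOrder α] (B₀ B₁ : Set α) : Prop :=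
  ∀ b₀ ∈ B₀, ∀ b₁ ∈ B₁, ¬ b₀ ≤ b₁ ∧ ¬ b₁ ≤ b₀

/-- `m` skewly tops `B₀, B₁` (with maxima `m₀, m₁`). -/
def SkewlyTops [PartialOrder α] (m : α) (B₀ B₁ : Set α) (m₀ m₁ : α) : Prop :=
  (m₀ ≤ m ∧ ¬ m₁ ≤ m ∧ ∀ p ∈ B₁ \ {m₁}, p ≤ m) ∨
  (m₁ ≤ m ∧ ¬ m₀ ≤ m ∧ ∀ p ∈ B₀ \ {m₀}, p ≤ m)

/-- `B₀` and `B₁` (with maxima `m₀, m₁`) are skewly topped. -/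
def SkewlyTopped [PartialOrder α] (B₀ B₁ : Set α) (m₀ m₁ : α) : Prop :=
  ∃ m : α, SkewlyTops m B₀ B₁ m₀ m₁

/-! The elements of `F_i − {max B_i}` are the maximal elements of `B_i − {max B_i}`. Since every
element has finitely many successors, each element of `B_i − {max B_i}` lies below one of them,
so `B_i − {max B_i}` and `F_i − {max B_i}` have the same upper bounds; skew topping only depends
on these upper bounds and on the maxima. -/

section

variable {α : Type} [PartialOrder α]

theorem upperBounds_eq_of_subset_of_forall_exists_le {s t : Set α} (hst : s ⊆ t)
    (hts : ∀ a ∈ t, ∃ b ∈ s, a ≤ b) : upperBounds t = upperBounds s :=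
  (upperBounds_mono_set hst).antisymm fun _ hm a ha =>
    let ⟨_, hb, hab⟩ := hts a ha
    hab.trans (hm hb)

def fanPart (B : Set α) (m : α) : Set α :=
  {b ∈ B | ∀ b' : α, b < b' → b' ∈ B → b' = m}

theorem fanPart_subset (B : Set α) (m : α) : fanPart B m ⊆ B :=
  fun _ hb => hb.1

theorem IsBouquet.mem_fanPart {B : Set α} {m : α} (hB : IsBouquet B m) : m ∈ fanPart B m :=
  ⟨hB.2.1, fun _ hlt hb' => (hB.2.2 _ hb').antisymm hlt.le⟩

theorem exists_mem_fanPart_diff_le {B : Set α} {m p : α} (hfin : (Set.Ici p).Finite)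
    (hp : p ∈ B \ {m}) : ∃ x ∈ fanPart B m \ {m}, p ≤ x := by
  let S : Set α := {x ∈ B \ {m} | p ≤ x}
  obtain ⟨x, ⟨hxB, hpx⟩, hxmax⟩ :=
    (hfin.subset fun x hx => hx.2 : S.Finite).exists_maximal ⟨p, hp, le_rfl⟩
  refine ⟨x, ⟨⟨hxB.1, fun b' hlt hb' => ?_⟩, hxB.2⟩, hpx⟩
  by_contra hne
  exact hlt.not_ge (hxmax ⟨⟨hb', hne⟩, hpx.trans hlt.le⟩ hlt.le)

theorem IsBouquet.isFan_fanPart {B : Set α} {m : α} (hfin : ∀ p : α, (Set.Ici p).Finite)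
    (hB : IsBouquet B m) : IsFan (fanPart B m) m := by
  obtain ⟨p, hpB, hpm⟩ := hB.1.exists_ne m
  obtain ⟨x, ⟨hx, hxm⟩, -⟩ := exists_mem_fanPart_diff_le (hfin p) ⟨hpB, hpm⟩
  refine ⟨⟨Set.nontrivial_of_mem_mem_ne hx hB.mem_fanPart hxm, hB.mem_fanPart,
    fun b hb => hB.2.2 b hb.1⟩, fun b hb b' hb' hle => ?_⟩
  by_contra hne
  exact hb'.2 (hb.1.2 b' (hle.lt_of_ne hne) hb'.1.1)

theorem upperBounds_diff_eq_upperBounds_fanPart_diff (hfin : ∀ p : α, (Set.Ici p).Finite)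
    (B : Set α) (m : α) :
    upperBounds (B \ {m}) = upperBounds (fanPart B m \ {m}) :=
  upperBounds_eq_of_subset_of_forall_exists_le (Set.sdiff_subset_sdiff_left (fanPart_subset B m))
    fun _ hp => exists_mem_fanPart_diff_le (hfin _) hp

theorem ParallelB.mono {B₀ B₁ F₀ F₁ : Set α} (h : ParallelB B₀ B₁)
    (h₀ : F₀ ⊆ B₀) (h₁ : F₁ ⊆ B₁) : ParallelB F₀ F₁ :=
  fun _ hb₀ _ hb₁ => h _ (h₀ hb₀) _ (h₁ hb₁)

theorem skewlyTops_congr {B₀ B₁ F₀ F₁ : Set α} {m₀ m₁ : α}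
    (h₀ : upperBounds (B₀ \ {m₀}) = upperBounds (F₀ \ {m₀}))
    (h₁ : upperBounds (B₁ \ {m₁}) = upperBounds (F₁ \ {m₁})) (m : α) :
    SkewlyTops m B₀ B₁ m₀ m₁ ↔ SkewlyTops m F₀ F₁ m₀ m₁ := by
  simp only [SkewlyTops, ← mem_upperBounds, h₀, h₁]

end

/-- Parallel bouquets can be replaced by parallel fans with the same maxima,
preserving skew topping, in a partial order where every element has finitely many
successors. -/
theorem bouquets_to_fans {α : Type} [PartialOrder α]
    (hfin : ∀ p : α, {p' : α | p ≤ p'}.Finite)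
    (B₀ B₁ : Set α) (m₀ m₁ : α) (h₀ : IsBouquet B₀ m₀) (h₁ : IsBouquet B₁ m₁)
    (hpar : ParallelB B₀ B₁) :
    letI F₀ : Set α := {b ∈ B₀ | ∀ b' : α, b < b' → b' ∈ B₀ → b' = m₀}
    letI F₁ : Set α := {b ∈ B₁ | ∀ b' : α, b < b' → b' ∈ B₁ → b' = m₁}
    IsFan F₀ m₀ ∧ IsFan F₁ m₁ ∧ ParallelB F₀ F₁ ∧
      ∀ m : α, (SkewlyTops m B₀ B₁ m₀ m₁ ↔ SkewlyTops m F₀ F₁ m₀ m₁) :=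
  ⟨h₀.isFan_fanPart hfin, h₁.isFan_fanPart hfin,
    hpar.mono (fanPart_subset B₀ m₀) (fanPart_subset B₁ m₁),
    skewlyTops_congr (upperBounds_diff_eq_upperBounds_fanPart_diff hfin B₀ m₀)
      (upperBounds_diff_eq_upperBounds_fanPart_diff hfin B₁ m₁)⟩

end SatOrder
end

section
/- Let P = (P, ≤_P) be a partial order, let φ be a parsimonious set representation of P, and suppose p₀, p₁ ∈ P are distinct elements with α_φ(p₀) = α_φ(p₁). Then p₀ and p₁ are ≤_P-incomparable and neither p₀ nor p₁ is a minimal element of P. -/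
namespace SatOrder

variable {α Q : Type}

section Alpha

variable [PartialOrder α] {φ : α → Set Q} {a : α → Q}

theorem IsAlpha.mem (ha : IsAlpha φ a) (p : α) : a p ∈ φ p :=
  ((ha p).symm ▸ rfl : a p ∈ resid φ p).1

theorem IsAlpha.ne_of_lt (ha : IsAlpha φ a) {p q : α} (hpq : p < q) : a p ≠ a q := by
  intro h
  have hq : a q ∈ resid φ q := (ha q).symm ▸ rfl
  exact hq.2 (Set.mem_biUnion hpq (h ▸ ha.mem p))

theorem IsAlpha.not_le_of_eq (ha : IsAlpha φ a) {p q : α} (hne : p ≠ q) (h : a p = a q) :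
    ¬ p ≤ q :=
  fun hle => ha.ne_of_lt (hle.lt_of_ne hne) h

theorem resid_eq_self_of_isMin (φ : α → Set Q) {p : α} (hp : IsMin p) : resid φ p = φ p := by
  simp [resid, hp.not_lt]

/-- A minimal `p` has `φ p = {α_φ p}`, so sharing its `α_φ`-value with `q` forces `φ p ⊊ φ q`. -/
theorem IsAlpha.not_isMin_of_eq (hφ : IsSetRep φ) (ha : IsAlpha φ a) {p q : α} (hne : p ≠ q)
    (h : a p = a q) : ¬ IsMin p := by
  intro hp
  have hsub : φ p ⊆ φ q := by
    rw [← resid_eq_self_of_isMin φ hp, ha p, Set.singleton_subset_iff, h]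
    exact ha.mem q
  have hlt : p < q := (hφ.2 p q).2 (hsub.ssubset_of_ne (hφ.1.ne hne))
  exact ha.ne_of_lt hlt h

end Alpha

/-- If `φ` is parsimonious and `p₀ ≠ p₁` with `α_φ p₀ = α_φ p₁`, then `p₀`
and `p₁` are incomparable and neither is minimal. -/
theorem incomparable_not_minimal_of_alpha_eq {α Q : Type} [PartialOrder α]
    (φ : α → Set Q) (hφ : IsParsimonious φ) (a : α → Q) (ha : IsAlpha φ a)
    (p₀ p₁ : α) (hne : p₀ ≠ p₁) (heq : a p₀ = a p₁) :
    (¬ p₀ ≤ p₁ ∧ ¬ p₁ ≤ p₀) ∧ (∃ p : α, p < p₀) ∧ (∃ p : α, p < p₁) :=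
  ⟨⟨ha.not_le_of_eq hne heq, ha.not_le_of_eq hne.symm heq.symm⟩,
    not_isMin_iff.1 (ha.not_isMin_of_eq hφ.1 hne heq),
    not_isMin_iff.1 (ha.not_isMin_of_eq hφ.1 hne.symm heq.symm)⟩

end SatOrder
end

section
/- A finite partial order P = (P, ≤_P) is saturated if and only if every two parallel fans in P are skewly topped. -/
/-!
A parsimonious set representation `φ` is determined by its residual map `a`: `φ p = a '' Iic p`,
so `⋃ p, φ p = range a` and saturation says exactly that every residual map is injective.
If two parallel fans with maxima `m₀, m₁` are not skewly topped, then merging the point `m₁` into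
`m₀` still represents the order, and its residual map is not injective. Conversely, if
`a p₀ = a p₁` with `p₀ ≠ p₁`, then `p₀, p₁` are incomparable, and for each of them the elements
it covers that do not lie below the other one form, together with it, a fan; these two fans are
parallel, and a skew top `m ≥ p₀` of them lies above `a p₁ = a p₀` and every element covered by
`p₁`, which forces `p₁ ≤ m`.
-/

namespace SatOrder

variable {α Q : Type}

/-- Parsimonious in the finite-cardinality sense: `|φ p| = |⋃_{p' < p} φ p'| + 1`. -/
def IsParsimoniousFin [PartialOrder α] (φ : α → Set Q) : Prop :=
  ∀ p : α, (φ p).ncard = (⋃ p' ∈ {x : α | x < p}, φ p').ncard + 1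

/-- Saturated in the finite-cardinality sense: `|P| = |⋃_{p} φ p|` for every parsimonious
set representation. -/
def IsSaturatedFin (α : Type) [PartialOrder α] : Prop :=
  ∀ (Q : Type) (φ : α → Set Q), IsSetRep φ → IsParsimoniousFin φ →
    Nat.card α = (⋃ p : α, φ p).ncard

open Set Function

section SetRep

variable [PartialOrder α]

theorem isSetRep_iff {φ : α → Set Q} : IsSetRep φ ↔ ∀ p p', φ p ⊆ φ p' ↔ p ≤ p' := by
  constructor
  · rintro ⟨hinj, hlt⟩ p p'
    rw [subset_iff_ssubset_or_eq, le_iff_lt_or_eq, hlt, hinj.eq_iff]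
  · intro h
    let e : α ↪o Set Q := OrderEmbedding.ofMapLEIff φ h
    exact ⟨e.injective, fun p p' => e.lt_iff_lt.symm⟩

theorem IsSetRep.biUnion_lt_subset {φ : α → Set Q} (hφ : IsSetRep φ) (p : α) :
    ⋃ p' ∈ {x : α | x < p}, φ p' ⊆ φ p :=
  iUnion₂_subset fun _ hp' => (isSetRep_iff.mp hφ _ _).mpr (le_of_lt hp')

theorem IsParsimoniousFin.exists_isAlpha {φ : α → Set Q} (hφ : IsSetRep φ)
    (hpars : IsParsimoniousFin φ) : ∃ a : α → Q, IsAlpha φ a := by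
  have hresid (p : α) : ∃ q, resid φ p = {q} := by
    have hfin : (φ p).Finite := finite_of_ncard_ne_zero (by rw [hpars p]; omega)
    rw [← ncard_eq_one, resid, ncard_sdiff' (hφ.biUnion_lt_subset p) hfin, hpars p]
    omega
  choose a ha using hresid
  exact ⟨a, ha⟩

theorem IsAlpha.apply_ne_of_lt {φ : α → Set Q} {a : α → Q} (ha : IsAlpha φ a) {p p' : α}
    (h : p < p') : a p ≠ a p' := by
  have hp : a p ∈ resid φ p := (ha p).symm ▸ rfl
  have hp' : a p' ∈ resid φ p' := (ha p').symm ▸ rfl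
  intro hpp'
  exact hp'.2 (mem_biUnion h (hpp' ▸ hp.1))

theorem biUnion_lt_image_Iic (a : α → Q) (p : α) :
    ⋃ p' ∈ {x : α | x < p}, a '' Iic p' = a '' Iio p := by
  ext q
  simp only [mem_iUnion, mem_image, mem_ofPred_eq, mem_Iic, mem_Iio, exists_prop]
  constructor
  · rintro ⟨p', hp', r, hr, rfl⟩
    exact ⟨r, hr.trans_lt hp', rfl⟩
  · rintro ⟨r, hr, rfl⟩
    exact ⟨r, hr, r, le_rfl, rfl⟩

theorem iUnion_image_Iic (a : α → Q) : ⋃ p, a '' Iic p = range a :=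
  Subset.antisymm (iUnion_subset fun _ => image_subset_range _ _)
    (range_subset_iff.mpr fun p => mem_iUnion.mpr ⟨p, p, le_rfl, rfl⟩)

theorem IsAlpha.eq_image_Iic [WellFoundedLT α] {φ : α → Set Q} {a : α → Q} (hφ : IsSetRep φ)
    (ha : IsAlpha φ a) (p : α) : φ p = a '' Iic p := by
  induction p using WellFoundedLT.induction with
  | ind p ih =>
    calc φ p = resid φ p ∪ ⋃ p' ∈ {x : α | x < p}, φ p' :=
          (sdiff_union_of_subset (hφ.biUnion_lt_subset p)).symm
      _ = {a p} ∪ ⋃ p' ∈ {x : α | x < p}, a '' Iic p' := by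
          rw [ha p]
          exact congrArg _ (iUnion₂_congr fun p' hp' => ih p' hp')
      _ = a '' Iic p := by
          rw [biUnion_lt_image_Iic, ← Iio_insert, image_insert_eq, singleton_union]

theorem isParsimoniousFin_image_Iic [Finite α] {a : α → Q}
    (ha : ∀ ⦃p p'⦄, p < p' → a p ≠ a p') : IsParsimoniousFin fun p => a '' Iic p := by
  intro p
  dsimp only
  rw [biUnion_lt_image_Iic, ← Iio_insert, image_insert_eq, ncard_insert_of_notMem]
  rintro ⟨p', hp', hap⟩
  exact ha hp' hap

theorem isSaturatedFin_iff [Finite α] : IsSaturatedFin α ↔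
    ∀ (Q : Type) (a : α → Q), IsSetRep (fun p => a '' Iic p) →
      (∀ ⦃p p'⦄, p < p' → a p ≠ a p') → Injective a := by
  constructor
  · intro hsat Q a hrep ha
    have hcard := hsat Q _ hrep (isParsimoniousFin_image_Iic ha)
    rw [iUnion_image_Iic, ← image_univ, ← ncard_univ] at hcard
    exact injOn_univ.mp (injOn_of_ncard_image_eq hcard.symm)
  · intro h Q φ hφ hpars
    obtain ⟨a, ha⟩ := hpars.exists_isAlpha hφ
    obtain rfl : φ = fun p => a '' Iic p := funext (ha.eq_image_Iic hφ)
    rw [iUnion_image_Iic, ncard_range_of_injective (h Q a hφ fun _ _ => ha.apply_ne_of_lt)]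

end SetRep

section Merge

variable [PartialOrder α] [DecidableEq α] {m₀ m₁ : α}

theorem mem_image_update_Iic {p q : α} :
    q ∈ update id m₁ m₀ '' Iic p ↔ q ≤ p ∧ q ≠ m₁ ∨ q = m₀ ∧ m₁ ≤ p := by
  constructor
  · rintro ⟨r, hr, rfl⟩
    by_cases hr₁ : r = m₁
    · subst hr₁
      exact Or.inr ⟨update_self .., hr⟩
    · rw [update_of_ne hr₁]
      exact Or.inl ⟨hr, hr₁⟩
  · rintro (⟨hq, hq₁⟩ | ⟨rfl, h₁⟩)
    · exact ⟨q, hq, update_of_ne hq₁ ..⟩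
    · exact ⟨m₁, h₁, update_self ..⟩

theorem update_apply_ne_of_lt (h₀₁ : ¬ m₀ ≤ m₁) (h₁₀ : ¬ m₁ ≤ m₀) ⦃p p' : α⦄ (h : p < p') :
    update id m₁ m₀ p ≠ update id m₁ m₀ p' := by
  by_cases hp : p = m₁
  · subst hp
    rw [update_self, update_of_ne h.ne']
    rintro rfl
    exact h₁₀ h.le
  · rw [update_of_ne hp]
    by_cases hp' : p' = m₁
    · subst hp'
      rw [update_self]
      rintro rfl
      exact h₀₁ h.le
    · rw [update_of_ne hp']
      exact h.ne

/-- If `φ p ⊆ φ p'` with `p ≰ p'`, then `p'` skewly tops the two fans. -/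
theorem isSetRep_image_update_Iic {F₀ F₁ : Set α} (hF₀ : ∀ b ∈ F₀, b ≤ m₀) (hF₁ : ∀ b ∈ F₁, b ≤ m₁)
    (h₁₀ : ¬ m₁ ≤ m₀) (htop : ¬ SkewlyTopped F₀ F₁ m₀ m₁) :
    IsSetRep fun p => update id m₁ m₀ '' Iic p := by
  refine isSetRep_iff.mpr fun p p' => ⟨fun hsub => ?_, fun h => image_mono (Iic_subset_Iic.mpr h)⟩
  have hle (b : α) (hbp : b ≤ p) (hb₁ : b ≠ m₁) : b ≤ p' ∨ b = m₀ ∧ m₁ ≤ p' :=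
    (mem_image_update_Iic.mp (hsub (mem_image_update_Iic.mpr (.inl ⟨hbp, hb₁⟩)))).imp_left And.left
  by_cases hp : p = m₁
  · subst hp
    obtain h₀ | h₁ := mem_image_update_Iic.mp (hsub (mem_image_update_Iic.mpr (.inr ⟨rfl, le_rfl⟩)))
    · by_contra h₁
      refine htop ⟨p', Or.inl ⟨h₀.1, h₁, fun b ⟨hb, hb₁⟩ => ?_⟩⟩
      exact (hle b (hF₁ b hb) hb₁).resolve_right fun h => h₁ h.2
    · exact h₁.2
  · obtain hp' | ⟨rfl, h₁⟩ := hle p le_rfl hp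
    · exact hp'
    · by_contra h₀
      refine htop ⟨p', Or.inr ⟨h₁, h₀, fun b ⟨hb, hb₀⟩ => ?_⟩⟩
      have hb₁ : b ≠ m₁ := by
        rintro rfl
        exact h₁₀ (hF₀ b hb)
      exact (hle b (hF₀ b hb) hb₁).resolve_right fun h => hb₀ h.1

end Merge

section CoverFan

variable [PartialOrder α]

def coverFan (u v : α) : Set α := insert u {d | d ⋖ u ∧ ¬ d ≤ v}

theorem isFan_coverFan {u v d : α} (hd : d ⋖ u) (hdv : ¬ d ≤ v) : IsFan (coverFan u v) u := by
  refine ⟨⟨⟨u, mem_insert _ _, d, mem_insert_of_mem _ ⟨hd, hdv⟩, hd.ne'⟩, mem_insert _ _, ?_⟩, ?_⟩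
  · rintro b (rfl | ⟨hb, -⟩)
    exacts [le_rfl, hb.le]
  · rintro b ⟨hb, hbu⟩ b' ⟨hb', hb'u⟩ hbb'
    have hcov : b ⋖ u := (hb.resolve_left hbu).1
    have hcov' : b' ⋖ u := (hb'.resolve_left hb'u).1
    exact ((hcov.eq_or_eq hbb' hcov'.le).resolve_right hcov'.ne).symm

theorem le_and_not_le_of_mem_coverFan {u v b : α} (huv : ¬ u ≤ v) (hb : b ∈ coverFan u v) :
    b ≤ u ∧ ¬ b ≤ v := by
  obtain rfl | ⟨hbu, hbv⟩ := hb
  exacts [⟨le_rfl, huv⟩, ⟨hbu.le, hbv⟩]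

theorem parallelB_of_le_of_not_le {B₀ B₁ : Set α} {u v : α} (h₀ : ∀ b ∈ B₀, b ≤ u ∧ ¬ b ≤ v)
    (h₁ : ∀ b ∈ B₁, b ≤ v ∧ ¬ b ≤ u) : ParallelB B₀ B₁ := fun b₀ hb₀ b₁ hb₁ =>
  ⟨fun h => (h₀ b₀ hb₀).2 (h.trans (h₁ b₁ hb₁).1), fun h => (h₁ b₁ hb₁).2 (h.trans (h₀ b₀ hb₀).1)⟩

variable [IsStronglyCoatomic α] {a : α → Q}

theorem le_of_forall_covBy_le (hrep : IsSetRep fun p => a '' Iic p) {u w : α}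
    (hu : a u ∈ a '' Iic w) (hcov : ∀ d, d ⋖ u → d ≤ w) : u ≤ w := by
  rw [← isSetRep_iff.mp hrep]
  rintro _ ⟨z, hz, rfl⟩
  obtain hz | rfl := hz.lt_or_eq
  · obtain ⟨d, hzd, hdu⟩ := exists_le_covBy_of_lt hz
    exact ⟨z, hzd.trans (hcov d hdu), rfl⟩
  · exact hu

theorem exists_covBy_not_le (hrep : IsSetRep fun p => a '' Iic p) {u v : α}
    (huv : a u = a v) (hle : ¬ u ≤ v) : ∃ d, d ⋖ u ∧ ¬ d ≤ v := by
  by_contra! h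
  exact hle (le_of_forall_covBy_le hrep ⟨v, le_rfl, huv.symm⟩ h)

theorem le_of_forall_mem_coverFan_le (hrep : IsSetRep fun p => a '' Iic p) {u v m : α}
    (huv : a u = a v) (hum : u ≤ m) (hm : ∀ b ∈ coverFan v u \ {v}, b ≤ m) : v ≤ m := by
  refine le_of_forall_covBy_le hrep ⟨u, hum, huv⟩ fun d hd => ?_
  by_cases hdu : d ≤ u
  · exact hdu.trans hum
  · exact hm d ⟨mem_insert_of_mem _ ⟨hd, hdu⟩, hd.ne⟩

theorem injective_of_forall_skewlyTopped (hrep : IsSetRep fun p => a '' Iic p)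
    (hlt : ∀ ⦃p p'⦄, p < p' → a p ≠ a p')
    (htop : ∀ (F₀ F₁ : Set α) (m₀ m₁ : α), IsFan F₀ m₀ → IsFan F₁ m₁ → ParallelB F₀ F₁ →
      SkewlyTopped F₀ F₁ m₀ m₁) : Injective a := by
  intro p₀ p₁ hp
  by_contra hne
  have h₀₁ : ¬ p₀ ≤ p₁ := fun h => hlt (h.lt_of_ne hne) hp
  have h₁₀ : ¬ p₁ ≤ p₀ := fun h => hlt (h.lt_of_ne (Ne.symm hne)) hp.symm
  obtain ⟨d₀, hd₀, hd₀p₁⟩ := exists_covBy_not_le hrep hp h₀₁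
  obtain ⟨d₁, hd₁, hd₁p₀⟩ := exists_covBy_not_le hrep hp.symm h₁₀
  obtain ⟨m, ⟨hm₀, hm₁, hF₁⟩ | ⟨hm₁, hm₀, hF₀⟩⟩ := htop _ _ p₀ p₁
    (isFan_coverFan hd₀ hd₀p₁) (isFan_coverFan hd₁ hd₁p₀)
    (parallelB_of_le_of_not_le (fun _ => le_and_not_le_of_mem_coverFan h₀₁)
      (fun _ => le_and_not_le_of_mem_coverFan h₁₀))
  · exact hm₁ (le_of_forall_mem_coverFan_le hrep hp hm₀ hF₁)
  · exact hm₀ (le_of_forall_mem_coverFan_le hrep hp.symm hm₁ hF₀)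

end CoverFan

/-- A finite partial order is saturated iff every two parallel fans in it are
skewly topped. -/
theorem finite_saturated_iff_fans_topped {α : Type} [PartialOrder α] [Finite α] :
    IsSaturatedFin α ↔
      ∀ (F₀ F₁ : Set α) (m₀ m₁ : α), IsFan F₀ m₀ → IsFan F₁ m₁ → ParallelB F₀ F₁ →
        SkewlyTopped F₀ F₁ m₀ m₁ := by
  classical
  rw [isSaturatedFin_iff]
  refine ⟨fun hsat F₀ F₁ m₀ m₁ hF₀ hF₁ hpar => ?_,
    fun htop Q a hrep hlt => injective_of_forall_skewlyTopped hrep hlt htop⟩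
  obtain ⟨h₀₁, h₁₀⟩ := hpar m₀ hF₀.1.2.1 m₁ hF₁.1.2.1
  by_contra htop
  have hinj := hsat α (update id m₁ m₀) (isSetRep_image_update_Iic hF₀.1.2.2 hF₁.1.2.2 h₁₀ htop)
    (update_apply_ne_of_lt h₀₁ h₁₀)
  have hne : m₁ ≠ m₀ := fun h => h₁₀ h.le
  exact hne (hinj (by rw [update_self, update_of_ne hne.symm, id]))

end SatOrder
end
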